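/- arXiv:2512.24953 — 7 statements merged into one kernel-verified Lean document; each statement's English description precedes it below -/
import Mathlib

section
/- Let F be a complex Banach space, let (K_N) be a sequence of bounded linear operators on F, and let U be a compact subset of ℂ. Suppose that for every z ∈ U there exist N_z ∈ ℕ and M_z < ∞ such that for all N > N_z one has z ∈ ρ(K_N) and ‖R(z, K_N)‖ ≤ M_z. Then there exist N_U ∈ ℕ and M_U < ∞ such that for all N > N_U and all z ∈ U, z ∈ ρ(K_N) and ‖R(z, K_N)‖ ≤ M_U; that is, sup over z ∈ U and N > N_U of ‖R(z, K_N)‖ is at most M_U. -/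
/-!
A resolvent bound at one point propagates to a disc around it: if `‖(z₀ - K)⁻¹‖ ≤ M`, then
`z - K = (z₀ - K)(1 + (z - z₀)(z₀ - K)⁻¹)` is invertible with `‖(z - K)⁻¹‖ ≤ 2M` as soon as
`2M‖z - z₀‖ ≤ 1`. The radius depends only on `M`, so the hypothesis gives, around each point of
`U`, a disc on which the resolvents of all `K_N` with `N` large are bounded uniformly in `N`;
finitely many such discs cover `U`.
-/

open Filter Topology
open scoped Ring

section NormedRing

variable {R : Type*} [NormedRing R] [HasSummableGeomSeries R] {a b : R}

theorem IsUnit.of_norm_inverse_mul_sub_lt_one (ha : IsUnit a) (h : ‖a⁻¹ʳ * (b - a)‖ < 1) :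
    IsUnit b := by
  have hb : b = a * (1 - -(a⁻¹ʳ * (b - a))) := by
    rw [sub_neg_eq_add, mul_add, mul_one, ← mul_assoc, Ring.mul_inverse_cancel a ha,
      one_mul, add_sub_cancel]
  rw [hb]
  exact ha.mul (Units.oneSub _ (by rwa [norm_neg])).isUnit

theorem norm_inverse_le_two_mul_of_norm_inverse_mul_sub_le (ha : IsUnit a)
    (h : ‖a⁻¹ʳ * (b - a)‖ ≤ 1 / 2) : ‖b⁻¹ʳ‖ ≤ 2 * ‖a⁻¹ʳ‖ := by
  have hb : IsUnit b := ha.of_norm_inverse_mul_sub_lt_one (by linarith)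
  have hid : b⁻¹ʳ = a⁻¹ʳ - a⁻¹ʳ * (b - a) * b⁻¹ʳ := by
    rw [← Ring.inverse_sub_inverse (iff_of_true ha hb), sub_sub_cancel]
  have : ‖b⁻¹ʳ‖ ≤ ‖a⁻¹ʳ‖ + 1 / 2 * ‖b⁻¹ʳ‖ :=
    calc ‖b⁻¹ʳ‖ ≤ ‖a⁻¹ʳ‖ + ‖a⁻¹ʳ * (b - a)‖ * ‖b⁻¹ʳ‖ := by
          nth_rewrite 1 [hid]
          exact (norm_sub_le _ _).trans (by gcongr; exact norm_mul_le _ _)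
      _ ≤ ‖a⁻¹ʳ‖ + 1 / 2 * ‖b⁻¹ʳ‖ := by gcongr
  linarith

end NormedRing

theorem resolventSet_and_norm_resolvent_le_of_near {𝕜 A : Type*} [NormedField 𝕜] [NormedRing A]
    [NormedAlgebra 𝕜 A] [HasSummableGeomSeries A] {a : A} {z₀ z : 𝕜} {M : ℝ}
    (hz₀ : z₀ ∈ resolventSet 𝕜 a) (hM : ‖resolvent a z₀‖ ≤ M) (hz : 2 * M * ‖z - z₀‖ ≤ 1) :
    z ∈ resolventSet 𝕜 a ∧ ‖resolvent a z‖ ≤ 2 * M := by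
  have hdiff : (algebraMap 𝕜 A z - a) - (algebraMap 𝕜 A z₀ - a) = algebraMap 𝕜 A (z - z₀) := by
    rw [map_sub]; abel
  have hsmall : ‖resolvent a z₀ * ((algebraMap 𝕜 A z - a) - (algebraMap 𝕜 A z₀ - a))‖ ≤ 1 / 2 :=
    calc _ = ‖(z - z₀) • resolvent a z₀‖ := by
          rw [hdiff, ← Algebra.commutes, ← Algebra.smul_def]
      _ ≤ ‖z - z₀‖ * M := (norm_smul_le _ _).trans (by gcongr)
      _ ≤ 1 / 2 := by linarith
  refine ⟨hz₀.of_norm_inverse_mul_sub_lt_one (hsmall.trans_lt (by norm_num)), ?_⟩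
  calc ‖resolvent a z‖ ≤ 2 * ‖resolvent a z₀‖ :=
        norm_inverse_le_two_mul_of_norm_inverse_mul_sub_le hz₀ hsmall
    _ ≤ 2 * M := by linarith

theorem IsCompact.exists_eventually_forall_bound {X ι : Type*} [TopologicalSpace X]
    {l : Filter ι} {s : Set X} (hs : IsCompact s) {P : ι → X → Prop} {g : ι → X → ℝ}
    (hloc : ∀ x ∈ s, ∃ t ∈ 𝓝[s] x, ∃ M, ∀ᶠ i in l, ∀ y ∈ t, P i y ∧ g i y ≤ M) :
    ∃ M, ∀ᶠ i in l, ∀ y ∈ s, P i y ∧ g i y ≤ M := by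
  refine hs.induction_on (p := fun t => ∃ M, ∀ᶠ i in l, ∀ y ∈ t, P i y ∧ g i y ≤ M)
    ⟨0, Eventually.of_forall fun _ _ hy => absurd hy (Set.notMem_empty _)⟩ ?_ ?_ hloc
  · rintro t t' htt' ⟨M, hM⟩
    exact ⟨M, hM.mono fun i hi y hy => hi y (htt' hy)⟩
  · rintro t t' ⟨M, hM⟩ ⟨M', hM'⟩
    refine ⟨max M M', (hM.and hM').mono fun i hi y hy => ?_⟩
    rcases hy with hy | hy
    · exact (hi.1 y hy).imp_right fun h => h.trans (le_max_left _ _)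
    · exact (hi.2 y hy).imp_right fun h => h.trans (le_max_right _ _)

/-- Uniform resolvent bound on a compact set: if for every `z` in a compact set
`U ⊆ ℂ` the resolvents `R(z, K_N)` eventually exist and are bounded by some
`M_z`, then there are `N_U` and `M_U` such that for all `N > N_U` and all
`z ∈ U`, `z ∈ ρ(K_N)` and `‖R(z, K_N)‖ ≤ M_U`. -/
theorem uniform_resolvent_bound_on_compact {F : Type*} [NormedAddCommGroup F]
    [NormedSpace ℂ F] [CompleteSpace F]
    (Kn : ℕ → F →L[ℂ] F) (U : Set ℂ) (hU : IsCompact U)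
    (h : ∀ z ∈ U, ∃ Nz : ℕ, ∃ Mz : ℝ,
      ∀ N > Nz, z ∈ resolventSet ℂ (Kn N) ∧ ‖resolvent (Kn N) z‖ ≤ Mz) :
    ∃ NU : ℕ, ∃ MU : ℝ,
      ∀ N > NU, ∀ z ∈ U, z ∈ resolventSet ℂ (Kn N) ∧
        ‖resolvent (Kn N) z‖ ≤ MU := by
  obtain ⟨M, hM⟩ := hU.exists_eventually_forall_bound (l := atTop)
    (P := fun N z => z ∈ resolventSet ℂ (Kn N)) (g := fun N z => ‖resolvent (Kn N) z‖)
    fun z hz => by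
      obtain ⟨Nz, Mz, hNz⟩ := h z hz
      have hdisc : {w : ℂ | 2 * Mz * ‖w - z‖ < 1} ∈ 𝓝 z :=
        ContinuousAt.eventually_lt (by fun_prop) continuousAt_const (by simp)
      refine ⟨_, mem_nhdsWithin_of_mem_nhds hdisc, 2 * Mz, ?_⟩
      filter_upwards [eventually_gt_atTop Nz] with N hN w hw
      exact resolventSet_and_norm_resolvent_le_of_near (hNz N hN).1 (hNz N hN).2 hw.le
  obtain ⟨NU, hNU⟩ := eventually_atTop.1 hM
  exact ⟨NU, M, fun N hN => hNU N hN.le⟩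
end

section
/- Let F be a complex Banach space, let (K_N) be a sequence of bounded linear operators on F, and let U be a compact subset of ℂ. Suppose that for every z ∈ U there exist N_z ∈ ℕ and M_z < ∞ such that for all N > N_z one has z ∈ ρ(K_N) and ‖R(z, K_N)‖ ≤ M_z. Then there exists N₀ ∈ ℕ such that for all N > N₀, U ⊆ ρ(K_N), i.e. σ(K_N) ∩ U = ∅. -/
/-- Quantitative perturbation of the resolvent set: if `z ∈ ρ(a)` and
`‖w - z‖ * ‖R(z,a)‖ < 1` then `w ∈ ρ(a)`. -/
lemma mem_resolventSet_of_norm_mul_lt {A : Type*} [NormedRing A] [NormedAlgebra ℂ A]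
    [CompleteSpace A] {a : A} {z w : ℂ} (hz : z ∈ resolventSet ℂ a)
    (h : ‖w - z‖ * ‖resolvent a z‖ < 1) : w ∈ resolventSet ℂ a := by
  rw [spectrum.mem_resolventSet_iff] at hz ⊢
  have h1 : ‖(z - w) • resolvent a z‖ < 1 := by
    rw [norm_smul, norm_sub_rev]; exact h
  have hu : IsUnit (1 - (z - w) • resolvent a z) := (Units.oneSub _ h1).isUnit
  have hres : (algebraMap ℂ A z - a) * resolvent a z = 1 :=
    Ring.mul_inverse_cancel _ hz
  have key : (algebraMap ℂ A z - a) * (1 - (z - w) • resolvent a z)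
      = algebraMap ℂ A w - a := by
    rw [mul_sub, mul_one, mul_smul_comm, hres]
    simp only [Algebra.algebraMap_eq_smul_one, sub_smul]
    abel
  have := hz.mul hu
  rwa [key] at this

/-- Eventual spectral exclusion on a compact set: if for every `z` in a compact
set `U ⊆ ℂ` the resolvents `R(z, K_N)` eventually exist and are bounded, then
there is `N₀` such that for all `N > N₀`, `U ⊆ ρ(K_N)`,
i.e. `σ(K_N) ∩ U = ∅`. -/
theorem eventual_spectral_exclusion_on_compact {F : Type*} [NormedAddCommGroup F]
    [NormedSpace ℂ F] [CompleteSpace F]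
    (Kn : ℕ → F →L[ℂ] F) (U : Set ℂ) (hU : IsCompact U)
    (h : ∀ z ∈ U, ∃ Nz : ℕ, ∃ Mz : ℝ,
      ∀ N > Nz, z ∈ resolventSet ℂ (Kn N) ∧ ‖resolvent (Kn N) z‖ ≤ Mz) :
    ∃ N₀ : ℕ, ∀ N > N₀,
      U ⊆ resolventSet ℂ (Kn N) ∧ spectrum ℂ (Kn N) ∩ U = ∅ := by
  choose! Nf Mf hf using h
  set r : ℂ → ℝ := fun z => 1 / (max (Mf z) 0 + 1) with hr
  have hrpos : ∀ z, 0 < r z := fun z => by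
    apply one_div_pos.mpr; positivity
  obtain ⟨t, htU, hcover⟩ := hU.elim_nhds_subcover (fun z => Metric.ball z (r z))
    (fun z _ => Metric.ball_mem_nhds z (hrpos z))
  refine ⟨t.sup Nf, fun N hN => ?_⟩
  have hsub : U ⊆ resolventSet ℂ (Kn N) := by
    intro w hw
    obtain ⟨z, hzt, hwz⟩ := Set.mem_iUnion₂.mp (hcover hw)
    have hNz : N > Nf z := lt_of_le_of_lt (Finset.le_sup hzt) hN
    obtain ⟨hzres, hznorm⟩ := hf z (htU z hzt) N hNz
    refine mem_resolventSet_of_norm_mul_lt hzres ?_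
    have hd : ‖w - z‖ < r z := by
      rw [Metric.mem_ball] at hwz
      simpa [Complex.dist_eq] using hwz
    have hM : ‖resolvent (Kn N) z‖ ≤ max (Mf z) 0 :=
      le_trans hznorm (le_max_left _ _)
    calc ‖w - z‖ * ‖resolvent (Kn N) z‖
        ≤ r z * (max (Mf z) 0) := by
          apply mul_le_mul hd.le hM (norm_nonneg _) (hrpos z).le
      _ < 1 := by
          rw [hr, div_mul_eq_mul_div, one_mul, div_lt_one (by positivity)]
          linarith [le_max_right (Mf z) (0:ℝ)]
  refine ⟨hsub, ?_⟩
  rw [Set.eq_empty_iff_forall_notMem]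
  intro x ⟨hxs, hxU⟩
  exact hxs (hsub hxU)
end

section
/- Let F be a complex Banach space, let P and P_N (N ∈ ℕ) be bounded linear operators on F that are projections (P ∘ P = P and P_N ∘ P_N = P_N for all N), such that P_N f → P f as N → ∞ for every f ∈ F, and such that the range of P is finite-dimensional. Then ‖(P − P_N) ∘ P‖ → 0 as N → ∞, where ‖·‖ is the operator norm. -/
/-! On a finite-dimensional space, pointwise convergence of operators is norm convergence, since
`E →L F` is then a finite product of copies of `F`. Factoring `P` through its finite-dimensional
range therefore upgrades `P_N f → P f` to `P_N ∘ P → P ∘ P` in operator norm. -/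

open Filter Topology

namespace ContinuousLinearMap

variable {𝕜 : Type*} [NontriviallyNormedField 𝕜] [CompleteSpace 𝕜]
  {E F G : Type*} [NormedAddCommGroup E] [NormedSpace 𝕜 E]
  [NormedAddCommGroup F] [NormedSpace 𝕜 F] [NormedAddCommGroup G] [NormedSpace 𝕜 G]
  {α : Type*} {l : Filter α}

theorem tendsto_of_forall_tendsto_apply [FiniteDimensional 𝕜 E] {T : α → E →L[𝕜] F}
    {S : E →L[𝕜] F} (h : ∀ x, Tendsto (fun a ↦ T a x) l (𝓝 (S x))) : Tendsto T l (𝓝 S) := by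
  let e : (E →L[𝕜] F) ≃L[𝕜] Fin (Module.finrank 𝕜 E) → F :=
    ((ContinuousLinearEquiv.ofFinrankEq (Module.finrank_fin_fun 𝕜).symm).arrowCongr
      (1 : F ≃L[𝕜] F)).trans (ContinuousLinearEquiv.piRing _)
  rw [e.toHomeomorph.isInducing.tendsto_nhds_iff, tendsto_pi_nhds]
  exact fun i ↦ h _

theorem tendsto_comp_of_finiteDimensional_range {T : α → F →L[𝕜] G} {S : F →L[𝕜] G}
    (A : E →L[𝕜] F) [FiniteDimensional 𝕜 (LinearMap.range (A : E →ₗ[𝕜] F))]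
    (h : ∀ x, Tendsto (fun a ↦ T a x) l (𝓝 (S x))) :
    Tendsto (fun a ↦ T a ∘L A) l (𝓝 (S ∘L A)) := by
  set R := LinearMap.range (A : E →ₗ[𝕜] F)
  have hA : A = R.subtypeL ∘L A.codRestrict R (LinearMap.mem_range_self (A : E →ₗ[𝕜] F)) := rfl
  have hR : Tendsto (fun a ↦ T a ∘L R.subtypeL) l (𝓝 (S ∘L R.subtypeL)) :=
    tendsto_of_forall_tendsto_apply fun x ↦ h x
  rw [hA]
  simp only [← comp_assoc]
  exact ((compL 𝕜 E R G).flip _).continuous.tendsto _ |>.comp hR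

end ContinuousLinearMap

theorem projection_convergence_norm_general {F : Type*} [NormedAddCommGroup F]
    [NormedSpace ℂ F]
    (P : F →L[ℂ] F) (Pn : ℕ → F →L[ℂ] F)
    (hconv : ∀ f : F, Tendsto (fun N => Pn N f) atTop (nhds (P f)))
    (hfin : FiniteDimensional ℂ (LinearMap.range (P : F →ₗ[ℂ] F))) :
    Tendsto (fun N => ‖(P - Pn N) ∘L P‖) atTop (nhds 0) := by
  have hPnP := ContinuousLinearMap.tendsto_comp_of_finiteDimensional_range P hconv
  simpa only [norm_sub_rev, ContinuousLinearMap.sub_comp] using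
    tendsto_iff_norm_sub_tendsto_zero.mp hPnP

/-- Projection convergence lemma (first assertion, Chatelin Prop. 3.10):
if projections `P_N` converge pointwise to a projection `P` with
finite-dimensional range, then `‖(P - P_N) ∘ P‖ → 0`. -/
theorem projection_convergence_norm {F : Type*} [NormedAddCommGroup F]
    [NormedSpace ℂ F] [CompleteSpace F]
    (P : F →L[ℂ] F) (Pn : ℕ → F →L[ℂ] F)
    (hP : P ∘L P = P) (hPn : ∀ N, Pn N ∘L Pn N = Pn N)
    (hconv : ∀ f : F, Tendsto (fun N => Pn N f) atTop (nhds (P f)))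
    (hfin : FiniteDimensional ℂ (LinearMap.range (P : F →ₗ[ℂ] F))) :
    Tendsto (fun N => ‖(P - Pn N) ∘L P‖) atTop (nhds 0) :=
  projection_convergence_norm_general P Pn hconv hfin
end

section
/- Let F be a complex Banach space, let P and P_N (N ∈ ℕ) be bounded linear operators on F that are projections (P ∘ P = P and P_N ∘ P_N = P_N for all N), such that P_N f → P f as N → ∞ for every f ∈ F, and such that the range of P is finite-dimensional with dimension m. Then there exists N₀ ∈ ℕ such that for all N > N₀, the restriction of P_N to the range of P is injective; in particular, the dimension of the range of P_N is at least m. -/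
/-! Since `P` is the identity on its range `S`, the restrictions `P_N|_S` converge pointwise to
the inclusion `S → F`. On the finite-dimensional space `S` pointwise convergence of operators is
norm convergence, and injective operators on a finite-dimensional space form a norm-open set, so
`P_N|_S` is eventually injective. -/

open Filter Topology

universe u v

theorem Submodule.lift_rank_le_of_injOn {R : Type*} {M : Type u} {N : Type v} [Ring R]
    [AddCommGroup M] [Module R M] [AddCommGroup N] [Module R N] {S : Submodule R M}
    {f : M →ₗ[R] N} (hf : Set.InjOn f S) :
    Cardinal.lift.{v} (Module.rank R S) ≤ Cardinal.lift.{u} (Module.rank R (LinearMap.range f)) := by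
  have hinj : Function.Injective (f ∘ₗ S.subtype) := Set.injOn_iff_injective.1 hf
  calc Cardinal.lift.{v} (Module.rank R S)
      = Cardinal.lift.{u} (Module.rank R (LinearMap.range (f ∘ₗ S.subtype))) :=
        (lift_rank_range_of_injective _ hinj).symm
    _ ≤ Cardinal.lift.{u} (Module.rank R (LinearMap.range f)) :=
        Cardinal.lift_le.2 (Submodule.rank_mono (LinearMap.range_comp_le_range _ _))

namespace ContinuousLinearMap

variable {𝕜 E F α : Type*} [NontriviallyNormedField 𝕜] [CompleteSpace 𝕜]
  [NormedAddCommGroup E] [NormedSpace 𝕜 E] [FiniteDimensional 𝕜 E]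
  [NormedAddCommGroup F] [NormedSpace 𝕜 F] {l : Filter α} {f : α → E →L[𝕜] F} {g : E →L[𝕜] F}

theorem tendsto_of_tendsto_apply_of_finiteDimensional
    (h : ∀ x, Tendsto (fun a => f a x) l (𝓝 (g x))) : Tendsto f l (𝓝 g) := by
  let v := Module.finBasis 𝕜 E
  obtain ⟨C, -, hC⟩ := v.exists_opNorm_le (F := F)
  have hδ : Tendsto (fun a => ∑ i, ‖f a (v i) - g (v i)‖) l (𝓝 0) := by
    simpa using tendsto_finsetSum Finset.univ fun i _ => ((h (v i)).sub_const (g (v i))).norm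
  rw [tendsto_iff_norm_sub_tendsto_zero]
  refine squeeze_zero (fun _ => norm_nonneg _)
    (fun a => hC (Finset.sum_nonneg fun _ _ => norm_nonneg _) fun i => ?_)
    (by simpa using hδ.const_mul C)
  exact Finset.single_le_sum (f := fun i => ‖f a (v i) - g (v i)‖)
    (fun _ _ => norm_nonneg _) (Finset.mem_univ i)

theorem eventually_injective_of_tendsto_apply (hg : Function.Injective g)
    (h : ∀ x, Tendsto (fun a => f a x) l (𝓝 (g x))) : ∀ᶠ a in l, Function.Injective (f a) :=
  tendsto_of_tendsto_apply_of_finiteDimensional h (isOpen_injective.mem_nhds hg)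

end ContinuousLinearMap

theorem projection_convergence_rank_general {F : Type*} [NormedAddCommGroup F]
    [NormedSpace ℂ F]
    (P : F →L[ℂ] F) (Pn : ℕ → F →L[ℂ] F)
    (hP : P ∘L P = P)
    (hconv : ∀ f : F, Tendsto (fun N => Pn N f) atTop (nhds (P f)))
    (hfin : FiniteDimensional ℂ (LinearMap.range (P : F →ₗ[ℂ] F)))
    (m : ℕ) (hm : Module.finrank ℂ (LinearMap.range (P : F →ₗ[ℂ] F)) = m) :
    ∃ N₀ : ℕ, ∀ N > N₀,
      Set.InjOn (Pn N) (LinearMap.range (P : F →ₗ[ℂ] F) : Set F) ∧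
        (m : Cardinal) ≤ Module.rank ℂ (LinearMap.range (Pn N : F →ₗ[ℂ] F)) := by
  set S := LinearMap.range (P : F →ₗ[ℂ] F)
  have hfix : ∀ x ∈ S, P x = x := by
    rintro x ⟨y, rfl⟩
    exact congr($hP y)
  have hinj : ∀ᶠ N in atTop, Function.Injective (Pn N ∘L S.subtypeL) :=
    ContinuousLinearMap.eventually_injective_of_tendsto_apply (g := S.subtypeL)
      Subtype.val_injective fun x => by simpa [hfix x x.2] using hconv x
  obtain ⟨N₀, hN₀⟩ := eventually_atTop.1 hinj
  refine ⟨N₀, fun N hN => ?_⟩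
  have hinjOn : Set.InjOn (Pn N) S := Set.injOn_iff_injective.2 (hN₀ N hN.le)
  refine ⟨hinjOn, ?_⟩
  rw [← hm, Module.finrank_eq_rank]
  simpa using Submodule.lift_rank_le_of_injOn (f := (Pn N : F →ₗ[ℂ] F)) hinjOn

/-- Projection convergence lemma (second assertion, Chatelin Prop. 3.10):
if projections `P_N` converge pointwise to a projection `P` whose range is
finite-dimensional of dimension `m`, then eventually `P_N` is injective on the
range of `P`; in particular `dim P_N(F) ≥ m`. -/
theorem projection_convergence_rank {F : Type*} [NormedAddCommGroup F]
    [NormedSpace ℂ F] [CompleteSpace F]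
    (P : F →L[ℂ] F) (Pn : ℕ → F →L[ℂ] F)
    (hP : P ∘L P = P) (hPn : ∀ N, Pn N ∘L Pn N = Pn N)
    (hconv : ∀ f : F, Tendsto (fun N => Pn N f) atTop (nhds (P f)))
    (hfin : FiniteDimensional ℂ (LinearMap.range (P : F →ₗ[ℂ] F)))
    (m : ℕ) (hm : Module.finrank ℂ (LinearMap.range (P : F →ₗ[ℂ] F)) = m) :
    ∃ N₀ : ℕ, ∀ N > N₀,
      Set.InjOn (Pn N) (LinearMap.range (P : F →ₗ[ℂ] F) : Set F) ∧
        (m : Cardinal) ≤ Module.rank ℂ (LinearMap.range (Pn N : F →ₗ[ℂ] F)) :=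
  projection_convergence_rank_general P Pn hP hconv hfin m hm
end

section
/- Let F be a complex Banach space, let K and K_N (N ∈ ℕ) be bounded linear operators on F with K_N f → K f as N → ∞ for every f ∈ F. Let c ∈ ℂ, r > 0, and suppose the circle S = {z ∈ ℂ : |z − c| = r} is contained in ρ(K), and that there exist N₀ ∈ ℕ and M < ∞ such that for all N > N₀ and all z ∈ S, z ∈ ρ(K_N) and ‖R(z, K_N)‖ ≤ M. Define the Riesz integrals P = (2πi)⁻¹ ∮_{|z−c|=r} R(z, K) dz and, for N > N₀, P_N = (2πi)⁻¹ ∮_{|z−c|=r} R(z, K_N) dz. Then for every f ∈ F, P_N f → P f as N → ∞. -/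
open Filter Metric

/-- The Riesz spectral projection `(2πi)⁻¹ ∮_{|z-c|=r} R(z, A) dz`. -/
noncomputable def rieszProjection {F : Type*} [NormedAddCommGroup F]
    [NormedSpace ℂ F] (A : F →L[ℂ] F) (c : ℂ) (r : ℝ) : F →L[ℂ] F :=
  (2 * (Real.pi : ℂ) * Complex.I)⁻¹ • (∮ z in C(c, r), resolvent A z)

/-!
By the second resolvent identity,
`R(z, K_N) f - R(z, K) f = R(z, K_N) (K_N - K) R(z, K) f`, so the uniform bound `M` on the
circle gives `R(z, K_N) f → R(z, K) f` for every `z` on it. The integrands `R(z, K_N) f` are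
bounded by `M ‖f‖`, and dominated convergence carries the limit through the contour integral.
-/

open Topology Complex

theorem continuousOn_resolvent {𝕜 A : Type*} [NontriviallyNormedField 𝕜] [NormedRing A]
    [NormedAlgebra 𝕜 A] [CompleteSpace A] (a : A) :
    ContinuousOn (resolvent a) (resolventSet 𝕜 a) :=
  fun _ hz => (spectrum.hasDerivAt_resolvent_const_left hz).continuousAt.continuousWithinAt

theorem circleIntegrable_resolvent {A : Type*} [NormedRing A] [NormedAlgebra ℂ A]
    [CompleteSpace A] {a : A} {c : ℂ} {R : ℝ} (hS : sphere c |R| ⊆ resolventSet ℂ a) :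
    CircleIntegrable (resolvent a) c R :=
  ((continuousOn_resolvent a).mono hS).circleIntegrable'

theorem ContinuousLinearMap.circleIntegral_apply {E F : Type*} [NormedAddCommGroup E]
    [NormedSpace ℂ E] [NormedAddCommGroup F] [NormedSpace ℂ F] {G : ℂ → E →L[ℂ] F} {c : ℂ}
    {R : ℝ} (hG : CircleIntegrable G c R) (v : E) :
    (∮ z in C(c, R), G z) v = ∮ z in C(c, R), G z v := by
  simp only [circleIntegral, ContinuousLinearMap.intervalIntegral_apply hG.out, smul_apply]

theorem circleIntegral.tendsto_integral_filter_of_dominated_convergence {E : Type*}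
    [NormedAddCommGroup E] [NormedSpace ℂ E] {ι : Type*} {l : Filter ι} [l.IsCountablyGenerated]
    {F : ι → ℂ → E} {f : ℂ → E} {c : ℂ} {R : ℝ} (C : ℝ)
    (hF_int : ∀ᶠ n in l, CircleIntegrable (F n) c R)
    (h_bound : ∀ᶠ n in l, ∀ z ∈ sphere c |R|, ‖F n z‖ ≤ C)
    (h_lim : ∀ z ∈ sphere c |R|, Tendsto (fun n => F n z) l (𝓝 (f z))) :
    Tendsto (fun n => ∮ z in C(c, R), F n z) l (𝓝 (∮ z in C(c, R), f z)) := by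
  refine intervalIntegral.tendsto_integral_filter_of_dominated_convergence (fun _ => |R| * C)
    (hF_int.mono fun n hn => hn.out.def'.aestronglyMeasurable) ?_ intervalIntegrable_const
    (.of_forall fun θ _ => (h_lim _ (circleMap_mem_sphere' c R θ)).const_smul _)
  filter_upwards [h_bound] with n hn
  refine .of_forall fun θ _ => ?_
  rw [norm_smul, deriv_circleMap, norm_mul, norm_circleMap_zero, norm_I, mul_one]
  exact mul_le_mul_of_nonneg_left (hn _ (circleMap_mem_sphere' c R θ)) (abs_nonneg R)

theorem tendsto_resolvent_apply_of_tendsto {𝕜 E ι : Type*} [NontriviallyNormedField 𝕜]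
    [NormedAddCommGroup E] [NormedSpace 𝕜 E] {l : Filter ι} {T : ι → E →L[𝕜] E}
    {T₀ : E →L[𝕜] E} {z : 𝕜} {M : ℝ} (hT : ∀ x, Tendsto (fun n => T n x) l (𝓝 (T₀ x)))
    (hz : z ∈ resolventSet 𝕜 T₀)
    (hbound : ∀ᶠ n in l, z ∈ resolventSet 𝕜 (T n) ∧ ‖resolvent (T n) z‖ ≤ M) (x : E) :
    Tendsto (fun n => resolvent (T n) z x) l (𝓝 (resolvent T₀ z x)) := by
  set y := resolvent T₀ z x
  have hy : Tendsto (fun n => M * ‖T n y - T₀ y‖) l (𝓝 0) := by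
    simpa using ((tendsto_iff_norm_sub_tendsto_zero.mp (hT y)).const_mul M)
  refine tendsto_iff_norm_sub_tendsto_zero.mpr
    (squeeze_zero' (.of_forall fun _ => norm_nonneg _) ?_ hy)
  filter_upwards [hbound] with n ⟨hzn, hMn⟩
  have hdiff : resolvent (T n) z x - y = resolvent (T n) z (T n y - T₀ y) := by
    simpa [y] using congr($(spectrum.resolvent_sub_resolvent hzn hz) x)
  rw [hdiff]
  exact (resolvent (T n) z).le_of_opNorm_le hMn _

theorem rieszProjection_apply {F : Type*} [NormedAddCommGroup F] [NormedSpace ℂ F]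
    {A : F →L[ℂ] F} {c : ℂ} {r : ℝ} (hA : CircleIntegrable (resolvent A) c r) (f : F) :
    rieszProjection A c r f = (2 * (Real.pi : ℂ) * I)⁻¹ • ∮ z in C(c, r), resolvent A z f := by
  rw [rieszProjection, smul_apply, ContinuousLinearMap.circleIntegral_apply hA]

/-- Pointwise convergence of approximate Riesz spectral projections: if
`K_N f → K f` pointwise, the circle `{|z - c| = r}` lies in `ρ(K)`, and the
resolvents of the `K_N` exist and are uniformly bounded on that circle for
`N > N₀`, then `P_N f → P f` for every `f`, where `P`, `P_N` are the Riesz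
integrals of the resolvents of `K`, `K_N` over the circle. -/
theorem riesz_projection_pointwise_convergence {F : Type*} [NormedAddCommGroup F]
    [NormedSpace ℂ F] [CompleteSpace F]
    (K : F →L[ℂ] F) (Kn : ℕ → F →L[ℂ] F)
    (hconv : ∀ f : F, Tendsto (fun N => Kn N f) atTop (nhds (K f)))
    (c : ℂ) (r : ℝ) (hr : 0 < r)
    (hS : sphere c r ⊆ resolventSet ℂ K)
    (N₀ : ℕ) (M : ℝ)
    (hstab : ∀ N > N₀, ∀ z ∈ sphere c r,
      z ∈ resolventSet ℂ (Kn N) ∧ ‖resolvent (Kn N) z‖ ≤ M) :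
    ∀ f : F, Tendsto (fun N => rieszProjection (Kn N) c r f) atTop
      (nhds (rieszProjection K c r f)) := by
  intro f
  rw [← abs_of_pos hr] at hS hstab
  have hstab' : ∀ z ∈ sphere c |r|, ∀ᶠ N in atTop,
      z ∈ resolventSet ℂ (Kn N) ∧ ‖resolvent (Kn N) z‖ ≤ M := fun z hz =>
    (eventually_gt_atTop N₀).mono fun N hN => hstab N hN z hz
  have hKn : ∀ᶠ N in atTop, sphere c |r| ⊆ resolventSet ℂ (Kn N) :=
    (eventually_gt_atTop N₀).mono fun N hN z hz => (hstab N hN z hz).1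
  rw [rieszProjection_apply (circleIntegrable_resolvent hS)]
  refine Tendsto.congr' (hKn.mono fun N hN => (rieszProjection_apply
    (circleIntegrable_resolvent hN) f).symm) (Tendsto.const_smul ?_ _)
  refine circleIntegral.tendsto_integral_filter_of_dominated_convergence (M * ‖f‖) ?_ ?_
    fun z hz => tendsto_resolvent_apply_of_tendsto hconv (hS hz) (hstab' z hz) f
  · exact hKn.mono fun N hN =>
      (((continuousOn_resolvent (Kn N)).mono hN).clm_apply continuousOn_const).circleIntegrable'
  · filter_upwards [eventually_gt_atTop N₀] with N hN z hz
    exact (resolvent (Kn N) z).le_of_opNorm_le (hstab N hN z hz).2 f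
end

section
/- Let F be a complex Banach space, let K be a bounded linear operator on F, let λ ∈ σ(K) and R > 0 be such that σ(K) ∩ {z ∈ ℂ : |z − λ| ≤ R} = {λ}. Let (K_N) be a sequence of bounded linear operators on F such that for every z ∈ ρ(K) there exist N_z ∈ ℕ and M_z < ∞ with z ∈ ρ(K_N) and ‖R(z, K_N)‖ ≤ M_z for all N > N_z. Then for every ε with 0 < ε ≤ R there exists N₀ ∈ ℕ such that for all N > N₀, σ(K_N) ∩ {z : |z − λ| ≤ R} ⊆ {z : |z − λ| < ε}. -/
open Metric

/-- If `z` is in the resolvent set of `a` with resolvent norm at most `M > 0`,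
then every point within `M⁻¹` of `z` is also in the resolvent set. -/
lemma mem_resolventSet_of_near {F : Type*} [NormedAddCommGroup F]
    [NormedSpace ℂ F] [CompleteSpace F] [Nontrivial F]
    (a : F →L[ℂ] F) (z w : ℂ) (hz : z ∈ resolventSet ℂ a)
    (M : ℝ) (hM : 0 < M) (hres : ‖resolvent a z‖ ≤ M)
    (hw : ‖w - z‖ < M⁻¹) : w ∈ resolventSet ℂ a := by
  set u : (F →L[ℂ] F)ˣ := hz.unit with hu
  have hinv : (↑u⁻¹ : F →L[ℂ] F) = resolvent a z := (spectrum.resolvent_eq hz).symm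
  have hpos : 0 < ‖(↑u⁻¹ : F →L[ℂ] F)‖ := Units.norm_pos u⁻¹
  have hdiff : (algebraMap ℂ (F →L[ℂ] F) w - a) - (u : F →L[ℂ] F)
      = algebraMap ℂ (F →L[ℂ] F) (w - z) := by
    have : (u : F →L[ℂ] F) = algebraMap ℂ (F →L[ℂ] F) z - a := rfl
    rw [this, map_sub]
    abel
  have hnorm : ‖(algebraMap ℂ (F →L[ℂ] F) w - a) - (u : F →L[ℂ] F)‖ = ‖w - z‖ := by
    rw [hdiff]
    exact norm_algebraMap' _ _
  have hlt : ‖(algebraMap ℂ (F →L[ℂ] F) w - a) - (u : F →L[ℂ] F)‖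
      < ‖(↑u⁻¹ : F →L[ℂ] F)‖⁻¹ := by
    rw [hnorm]
    refine hw.trans_le ?_
    apply inv_anti₀ hpos
    rw [hinv]; exact hres
  exact spectrum.mem_resolventSet_iff.mpr
    (u.ofNearby (algebraMap ℂ (F →L[ℂ] F) w - a) hlt).isUnit

/-- Upper semicontinuity of the approximate spectra near an isolated spectral
point (no spectral pollution): if `λ` is the only point of `σ(K)` in the closed
ball of radius `R` and the approximations `K_N` are stably convergent (for each
`z ∈ ρ(K)` the resolvents `R(z, K_N)` eventually exist and are bounded), then
for every `0 < ε ≤ R` and all large `N`,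
`σ(K_N) ∩ {|z - λ| ≤ R} ⊆ {|z - λ| < ε}`. -/
theorem spectral_upper_semicontinuity {F : Type*} [NormedAddCommGroup F]
    [NormedSpace ℂ F] [CompleteSpace F]
    (K : F →L[ℂ] F) (l : ℂ) (hl : l ∈ spectrum ℂ K)
    (R : ℝ) (hR : 0 < R)
    (hiso : spectrum ℂ K ∩ closedBall l R = {l})
    (Kn : ℕ → F →L[ℂ] F)
    (hstab : ∀ z ∈ resolventSet ℂ K, ∃ Nz : ℕ, ∃ Mz : ℝ,
      ∀ N > Nz, z ∈ resolventSet ℂ (Kn N) ∧ ‖resolvent (Kn N) z‖ ≤ Mz)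
    (ε : ℝ) (hε : 0 < ε) (hεR : ε ≤ R) :
    ∃ N₀ : ℕ, ∀ N > N₀,
      spectrum ℂ (Kn N) ∩ closedBall l R ⊆ ball l ε := by
  -- F is nontrivial since σ(K) is nonempty
  have hFnt : Nontrivial F := by
    by_contra h
    rw [not_nontrivial_iff_subsingleton] at h
    have : Subsingleton (F →L[ℂ] F) := inferInstance
    have := spectrum.resolventSet_of_subsingleton (R := ℂ) K
    have : spectrum ℂ K = ∅ := by
      rw [spectrum, this, Set.compl_univ]
    exact absurd (this ▸ hl) (Set.notMem_empty l)
  -- The compact annulus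
  set S : Set ℂ := closedBall l R \ ball l ε with hS
  have hScompact : IsCompact S := (isCompact_closedBall l R).diff isOpen_ball
  -- Each point of S is in ρ(K)
  have hSres : ∀ z ∈ S, z ∈ resolventSet ℂ K := by
    intro z hz
    by_contra hzρ
    have hzσ : z ∈ spectrum ℂ K := hzρ
    have : z ∈ spectrum ℂ K ∩ closedBall l R := ⟨hzσ, hz.1⟩
    rw [hiso] at this
    have : z = l := this
    subst this
    exact hz.2 (mem_ball_self hε)
  -- For each z, a radius r and rank Nz such that for N > Nz the ball of
  -- radius r around z is contained in ρ(Kn N) (trivial if z ∉ S)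
  have key : ∀ z : ℂ, ∃ r : ℝ, 0 < r ∧ ∃ Nz : ℕ,
      ∀ N > Nz, z ∈ S → ∀ w ∈ ball z r, w ∈ resolventSet ℂ (Kn N) := by
    intro z
    by_cases hz : z ∈ S
    · obtain ⟨Nz, Mz, hNM⟩ := hstab z (hSres z hz)
      set M : ℝ := max Mz 1 with hM
      have hMpos : 0 < M := lt_of_lt_of_le one_pos (le_max_right _ _)
      refine ⟨M⁻¹, inv_pos.mpr hMpos, Nz, fun N hN _ w hw => ?_⟩
      obtain ⟨hres, hbound⟩ := hNM N hN
      exact mem_resolventSet_of_near (Kn N) z w hres M hMpos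
        (hbound.trans (le_max_left _ _)) (by rwa [mem_ball, dist_eq_norm] at hw)
    · exact ⟨1, one_pos, 0, fun N _ hz' => absurd hz' hz⟩
  choose r hr Nf hNf using key
  -- Extract a finite subcover
  obtain ⟨t, htS, hcover⟩ := hScompact.elim_nhds_subcover (fun z => ball z (r z))
    (fun x _ => ball_mem_nhds x (hr x))
  refine ⟨t.sup Nf, fun N hN w hw => ?_⟩
  by_contra hwball
  have hwS : w ∈ S := ⟨hw.2, hwball⟩
  obtain ⟨z, hzt, hwz⟩ := Set.mem_iUnion₂.mp (hcover hwS)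
  have hNz : N > Nf z := lt_of_le_of_lt (Finset.le_sup hzt) hN
  exact hw.1 (hNf z N hNz (htS z hzt) w hwz)
end

section
/- Let F be a complex Banach space, let K and K' be bounded linear operators on F, and let P be a bounded linear projection on F (P ∘ P = P) whose range M is a finite-dimensional subspace of dimension m ≥ 1 that is invariant under K' (i.e., K'(M) ⊆ M). Let g : M → M be the restriction of K' to M, and let h : M → M be the map x ↦ P(K x) (which takes values in M since P projects onto M). Then |(1/m)·tr(h) − (1/m)·tr(g)| ≤ ‖P‖ · ‖(K − K') ∘ P‖, where ‖·‖ denotes operator norms. -/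
/-!
On `M = range P` the projection `P` acts as the identity and `K'` maps `M` into itself, so
`h - g` is `x ↦ P ((K - K') (P x))`, whose norm is at most `‖P‖ * ‖(K - K') ∘ P‖`. Every
eigenvalue of an operator bounded by `C` has modulus at most `C`, and over `ℂ` the trace is
the sum of the `m` eigenvalues, so `|tr h - tr g| = |tr (h - g)| ≤ m * ‖P‖ * ‖(K - K') ∘ P‖`.
-/

open Module

namespace Module.End

variable {𝕜 E : Type*} [NormedField 𝕜] [NormedAddCommGroup E] [NormedSpace 𝕜 E]

theorem HasEigenvalue.norm_le {T : End 𝕜 E} {μ : 𝕜} {C : ℝ} (hμ : T.HasEigenvalue μ)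
    (hT : ∀ x, ‖T x‖ ≤ C * ‖x‖) : ‖μ‖ ≤ C := by
  obtain ⟨x, hx⟩ := hμ.exists_hasEigenvector
  refine le_of_mul_le_mul_right ?_ (norm_pos_iff.2 hx.2)
  calc ‖μ‖ * ‖x‖ = ‖T x‖ := by rw [hx.apply_eq_smul, norm_smul]
    _ ≤ C * ‖x‖ := hT x

theorem norm_trace_le_finrank_mul [IsAlgClosed 𝕜] [FiniteDimensional 𝕜 E] (T : End 𝕜 E)
    {C : ℝ} (hT : ∀ x, ‖T x‖ ≤ C * ‖x‖) :
    ‖LinearMap.trace 𝕜 E T‖ ≤ finrank 𝕜 E * C := by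
  have hsplit := IsAlgClosed.splits T.charpoly
  have hroots : ∀ r ∈ T.charpoly.roots.map norm, r ≤ C := by
    simp only [Multiset.mem_map, forall_exists_index, and_imp]
    rintro _ μ hμ rfl
    exact ((hasEigenvalue_iff_isRoot_charpoly T μ).2
      (Polynomial.isRoot_of_mem_roots hμ)).norm_le hT
  calc ‖LinearMap.trace 𝕜 E T‖ = ‖T.charpoly.roots.sum‖ := by
        rw [trace_eq_sum_roots_charpoly_of_splits hsplit]
    _ ≤ (T.charpoly.roots.map norm).sum := norm_multiset_sum_le _
    _ ≤ (T.charpoly.roots.map norm).card • C := Multiset.sum_le_card_nsmul _ _ hroots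
    _ = finrank 𝕜 E * C := by
        rw [Multiset.card_map, Polynomial.splits_iff_card_roots.1 hsplit,
          LinearMap.charpoly_natDegree, nsmul_eq_mul]

end Module.End

section Compression

variable {𝕜 F : Type*} [NontriviallyNormedField 𝕜] [NormedAddCommGroup F] [NormedSpace 𝕜 F]
  {K K' P : F →L[𝕜] F}

theorem coe_restrict_comp_sub_restrict_apply (hP : IsIdempotentElem P)
    (hinv : ∀ x ∈ LinearMap.range (P : F →ₗ[𝕜] F),
      (K' : F →ₗ[𝕜] F) x ∈ LinearMap.range (P : F →ₗ[𝕜] F))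
    (hPK : ∀ x ∈ LinearMap.range (P : F →ₗ[𝕜] F),
      ((P ∘L K : F →L[𝕜] F) : F →ₗ[𝕜] F) x ∈ LinearMap.range (P : F →ₗ[𝕜] F))
    (x : LinearMap.range (P : F →ₗ[𝕜] F)) :
    ((((P ∘L K : F →L[𝕜] F) : F →ₗ[𝕜] F).restrict hPK - (K' : F →ₗ[𝕜] F).restrict hinv) x : F) =
      (P ∘L ((K - K') ∘L P)) x := by
  have hfix : ∀ y ∈ LinearMap.range (P : F →ₗ[𝕜] F), P y = y := fun _ =>
    (LinearMap.IsIdempotentElem.mem_range_iff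
      (ContinuousLinearMap.IsIdempotentElem.toLinearMap hP)).1
  simp only [ContinuousLinearMap.toLinearMap_comp, LinearMap.sub_apply, AddSubgroupClass.coe_sub,
    LinearMap.coe_restrict_apply, LinearMap.coe_comp, ContinuousLinearMap.coe_coe,
    Function.comp_apply, ContinuousLinearMap.sub_comp, ContinuousLinearMap.comp_sub,
    sub_apply, ContinuousLinearMap.comp_apply, hfix _ x.2, sub_right_inj]
  exact (hfix _ (hinv _ x.2)).symm

theorem norm_restrict_comp_sub_restrict_apply_le (hP : IsIdempotentElem P)
    (hinv : ∀ x ∈ LinearMap.range (P : F →ₗ[𝕜] F),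
      (K' : F →ₗ[𝕜] F) x ∈ LinearMap.range (P : F →ₗ[𝕜] F))
    (hPK : ∀ x ∈ LinearMap.range (P : F →ₗ[𝕜] F),
      ((P ∘L K : F →L[𝕜] F) : F →ₗ[𝕜] F) x ∈ LinearMap.range (P : F →ₗ[𝕜] F))
    (x : LinearMap.range (P : F →ₗ[𝕜] F)) :
    ‖(((P ∘L K : F →L[𝕜] F) : F →ₗ[𝕜] F).restrict hPK - (K' : F →ₗ[𝕜] F).restrict hinv) x‖ ≤
      ‖P‖ * ‖(K - K') ∘L P‖ * ‖x‖ := by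
  rw [← Submodule.norm_coe, coe_restrict_comp_sub_restrict_apply hP, ← Submodule.norm_coe x]
  exact ((P ∘L ((K - K') ∘L P)).le_opNorm _).trans
    (mul_le_mul_of_nonneg_right (ContinuousLinearMap.opNorm_comp_le _ _) (norm_nonneg _))

end Compression

theorem mean_eigenvalue_residual_bound_general {F : Type*} [NormedAddCommGroup F]
    [NormedSpace ℂ F]
    (K K' P : F →L[ℂ] F) (hP : P ∘L P = P)
    [FiniteDimensional ℂ (LinearMap.range (P : F →ₗ[ℂ] F))]
    (m : ℕ)
    (hdim : Module.finrank ℂ (LinearMap.range (P : F →ₗ[ℂ] F)) = m)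
    (hinv : ∀ x ∈ LinearMap.range (P : F →ₗ[ℂ] F),
      (K' : F →ₗ[ℂ] F) x ∈ LinearMap.range (P : F →ₗ[ℂ] F))
    (hPK : ∀ x ∈ LinearMap.range (P : F →ₗ[ℂ] F),
      ((P ∘L K : F →L[ℂ] F) : F →ₗ[ℂ] F) x ∈ LinearMap.range (P : F →ₗ[ℂ] F)) :
    ‖(1 / (m : ℂ)) * LinearMap.trace ℂ (LinearMap.range (P : F →ₗ[ℂ] F))
            (((P ∘L K : F →L[ℂ] F) : F →ₗ[ℂ] F).restrict hPK) -
          (1 / (m : ℂ)) * LinearMap.trace ℂ (LinearMap.range (P : F →ₗ[ℂ] F))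
            ((K' : F →ₗ[ℂ] F).restrict hinv)‖ ≤
      ‖P‖ * ‖(K - K') ∘L P‖ := by
  have htrace := End.norm_trace_le_finrank_mul _
    (norm_restrict_comp_sub_restrict_apply_le hP hinv hPK)
  rw [map_sub, hdim] at htrace
  rw [← mul_sub, norm_mul, norm_div, norm_one, Complex.norm_natCast, one_div_mul_eq_div]
  exact div_le_of_le_mul₀ m.cast_nonneg (by positivity) (by rwa [mul_comm])

/-- A posteriori bound for the mean approximate eigenvalue (core estimate of
Theorem 3 of Section 5): with `P` a bounded projection whose range `M` has
finite dimension `m ≥ 1` and is invariant under `K'`, `g = K'|_M`, and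
`h = (P ∘ K)|_M`, one has `|(1/m)·tr(h) - (1/m)·tr(g)| ≤ ‖P‖·‖(K - K') ∘ P‖`. -/
theorem mean_eigenvalue_residual_bound {F : Type*} [NormedAddCommGroup F]
    [NormedSpace ℂ F] [CompleteSpace F]
    (K K' P : F →L[ℂ] F) (hP : P ∘L P = P)
    [FiniteDimensional ℂ (LinearMap.range (P : F →ₗ[ℂ] F))]
    (m : ℕ) (hm : 1 ≤ m)
    (hdim : Module.finrank ℂ (LinearMap.range (P : F →ₗ[ℂ] F)) = m)
    (hinv : ∀ x ∈ LinearMap.range (P : F →ₗ[ℂ] F),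
      (K' : F →ₗ[ℂ] F) x ∈ LinearMap.range (P : F →ₗ[ℂ] F))
    (hPK : ∀ x ∈ LinearMap.range (P : F →ₗ[ℂ] F),
      ((P ∘L K : F →L[ℂ] F) : F →ₗ[ℂ] F) x ∈ LinearMap.range (P : F →ₗ[ℂ] F)) :
    ‖(1 / (m : ℂ)) * LinearMap.trace ℂ (LinearMap.range (P : F →ₗ[ℂ] F))
            (((P ∘L K : F →L[ℂ] F) : F →ₗ[ℂ] F).restrict hPK) -
          (1 / (m : ℂ)) * LinearMap.trace ℂ (LinearMap.range (P : F →ₗ[ℂ] F))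
            ((K' : F →ₗ[ℂ] F).restrict hinv)‖ ≤
      ‖P‖ * ‖(K - K') ∘L P‖ :=
  mean_eigenvalue_residual_bound_general K K' P hP m hdim hinv hPK
end
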